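/- There exists a C^∞-smooth function g : (0,1) → ℝ satisfying: (i) g(t) = −2n for all t in the closed interval [ (1/(n+1))(1 + 1/(3n)), (1/(n+1))(1 + 2/(3n)) ], for every integer n ≥ 4; (ii) there exist constants c₁, c₂ > 0 such that −c₁/t ≤ g(t) ≤ −c₂/t for all t ∈ (0,1); (iii) for each k ∈ ℕ there exists a constant C(k) > 0, depending only on k, such that |g^{(k)}(t)| ≤ C(k)/t^{3k+1} for all t ∈ (0,1). -/

import Mathlib

/-! Write `ℓₙ, rₙ` for the ends of the `n`-th plateau. Between `r_{n+1}` and `ℓₙ`, a gap of width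
`2/(3n(n+2))`, the function climbs from `-2(n+1)` to `-2n` along `Real.smoothTransition` rescaled
to the gap. Near every `t ∈ (0,1)` it coincides with one such rescaled transition with `n ≍ 1/t`.
Hence `|g(t)| ≍ 1/t`, and since the gap has width `≍ t²` the `k`-th derivative is
`O(t^{-2k})`, which is better than the required `t^{-(3k+1)}`. -/

open Set Filter Topology Real

noncomputable section

def ramp (a b t : ℝ) : ℝ := smoothTransition ((t - a) / (b - a))

lemma ramp_of_le {a b t : ℝ} (hab : a ≤ b) (ht : t ≤ a) : ramp a b t = 0 :=
  smoothTransition.zero_of_nonpos (div_nonpos_of_nonpos_of_nonneg (by linarith) (by linarith))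

lemma ramp_of_ge {a b t : ℝ} (hab : a < b) (ht : b ≤ t) : ramp a b t = 1 :=
  smoothTransition.one_of_one_le ((one_le_div (by linarith)).2 (by linarith))

lemma contDiff_ramp (a b : ℝ) {m : ℕ∞} : ContDiff ℝ m (ramp a b) :=
  smoothTransition.contDiff.comp ((contDiff_id.sub contDiff_const).div_const _)

lemma iteratedDeriv_ramp (a b : ℝ) (k : ℕ) (t : ℝ) :
    iteratedDeriv k (ramp a b) t =
      (b - a)⁻¹ ^ k * iteratedDeriv k smoothTransition ((t - a) / (b - a)) := by
  have h : ramp a b = fun t => (fun z => smoothTransition ((b - a)⁻¹ * z)) (t - a) := by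
    ext t; simp only [ramp, div_eq_inv_mul]
  rw [h, iteratedDeriv_comp_sub_const (f := fun z => smoothTransition ((b - a)⁻¹ * z)),
    iteratedDeriv_comp_const_mul smoothTransition.contDiff, div_eq_inv_mul]

lemma hasCompactSupport_iteratedDeriv_smoothTransition {k : ℕ} (hk : k ≠ 0) :
    HasCompactSupport (iteratedDeriv k smoothTransition) := by
  refine HasCompactSupport.intro (isCompact_Icc (a := 0) (b := 1)) fun x hx => ?_
  have hconst : smoothTransition =ᶠ[𝓝 x] fun _ => smoothTransition x := by
    rcases not_and_or.1 hx with h | h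
    · filter_upwards [eventually_lt_nhds (not_le.1 h)] with y hy
      rw [smoothTransition.zero_of_nonpos hy.le, smoothTransition.zero_of_nonpos (not_le.1 h).le]
    · filter_upwards [eventually_gt_nhds (not_le.1 h)] with y hy
      rw [smoothTransition.one_of_one_le hy.le, smoothTransition.one_of_one_le (not_le.1 h).le]
  rw [hconst.iteratedDeriv_eq, iteratedDeriv_const, if_neg hk]

lemma exists_abs_iteratedDeriv_smoothTransition_le (k : ℕ) :
    ∃ M, ∀ x, |iteratedDeriv k smoothTransition x| ≤ M := by
  rcases eq_or_ne k 0 with rfl | hk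
  · exact ⟨1, fun x => by
      simpa [abs_of_nonneg (smoothTransition.nonneg x)] using smoothTransition.le_one x⟩
  · exact (smoothTransition.contDiff.continuous_iteratedDeriv k le_rfl
      ).bounded_above_of_compact_support (hasCompactSupport_iteratedDeriv_smoothTransition hk)

def plateauLeft (n : ℕ) : ℝ := (1 / ((n:ℝ)+1)) * (1 + 1 / (3*(n:ℝ)))

def plateauRight (n : ℕ) : ℝ := (1 / ((n:ℝ)+1)) * (1 + 2 / (3*(n:ℝ)))

section PlateauArithmetic

variable {n : ℕ}

lemma plateauLeft_lt_plateauRight (hn : 1 ≤ n) : plateauLeft n < plateauRight n := by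
  have : (1:ℝ) ≤ n := by exact_mod_cast hn
  unfold plateauLeft plateauRight
  gcongr
  norm_num

lemma plateauLeft_sub_plateauRight_succ (hn : 1 ≤ n) :
    plateauLeft n - plateauRight (n + 1) = 2 / (3 * n * (n + 2)) := by
  have : (1:ℝ) ≤ n := by exact_mod_cast hn
  unfold plateauLeft plateauRight
  push_cast
  field_simp
  ring

lemma plateauRight_succ_lt_plateauLeft (hn : 1 ≤ n) : plateauRight (n + 1) < plateauLeft n := by
  have : (1:ℝ) ≤ n := by exact_mod_cast hn
  have := plateauLeft_sub_plateauRight_succ hn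
  have : 0 < 2 / (3 * (n:ℝ) * (n + 2)) := by positivity
  linarith

lemma inv_succ_le_plateauRight (n : ℕ) : 1 / ((n:ℝ) + 1) ≤ plateauRight n := by
  unfold plateauRight
  have : (0:ℝ) ≤ 2 / (3 * n) := by positivity
  have : (0:ℝ) ≤ 1 / (n + 1) := by positivity
  nlinarith

lemma plateauRight_pos (n : ℕ) : 0 < plateauRight n :=
  lt_of_lt_of_le (by positivity) (inv_succ_le_plateauRight n)

lemma plateauRight_le (hn : 1 ≤ n) : plateauRight n ≤ 2 / ((n:ℝ) + 1) := by
  have : (1:ℝ) ≤ n := by exact_mod_cast hn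
  have : 2 / (3 * (n:ℝ)) ≤ 1 := by rw [div_le_one (by positivity)]; linarith
  unfold plateauRight
  calc 1 / ((n:ℝ) + 1) * (1 + 2 / (3 * n)) ≤ 1 / ((n:ℝ) + 1) * 2 := by gcongr; linarith
    _ = 2 / ((n:ℝ) + 1) := by ring

lemma plateauRight_succ_lt (hn : 1 ≤ n) : plateauRight (n + 1) < plateauRight n :=
  (plateauRight_succ_lt_plateauLeft hn).trans (plateauLeft_lt_plateauRight hn)

lemma plateauRight_anti {m n : ℕ} (hm : 1 ≤ m) (hmn : m ≤ n) : plateauRight n ≤ plateauRight m := by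
  induction n, hmn using Nat.le_induction with
  | base => exact le_rfl
  | succ n hn ih => exact (plateauRight_succ_lt (hm.trans hn)).le.trans ih

end PlateauArithmetic

def stairStep (n : ℕ) (t : ℝ) : ℝ :=
  -(2 * ((n:ℝ) + 1)) + 2 * ramp (plateauRight (n + 1)) (plateauLeft n) t

section Step

variable {n : ℕ} {t : ℝ}

lemma contDiff_stairStep (n : ℕ) {m : ℕ∞} : ContDiff ℝ m (stairStep n) :=
  contDiff_const.add (contDiff_const.mul (contDiff_ramp _ _))

lemma stairStep_of_le_plateauRight (hn : 1 ≤ n) (ht : t ≤ plateauRight (n + 1)) :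
    stairStep n t = -(2 * ((n:ℝ) + 1)) := by
  rw [stairStep, ramp_of_le (plateauRight_succ_lt_plateauLeft hn).le ht]
  ring

lemma stairStep_of_plateauLeft_le (hn : 1 ≤ n) (ht : plateauLeft n ≤ t) :
    stairStep n t = -(2 * (n:ℝ)) := by
  rw [stairStep, ramp_of_ge (plateauRight_succ_lt_plateauLeft hn) ht]
  ring

lemma stairStep_mem_Icc (n : ℕ) (t : ℝ) :
    stairStep n t ∈ Icc (-(2 * ((n:ℝ) + 1))) (-(2 * (n:ℝ))) := by
  obtain ⟨h0, h1⟩ : ramp (plateauRight (n + 1)) (plateauLeft n) t ∈ Icc 0 1 :=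
    ⟨smoothTransition.nonneg _, smoothTransition.le_one _⟩
  rw [stairStep, mem_Icc]
  constructor <;> linarith

lemma iteratedDeriv_stairStep {k : ℕ} (hk : k ≠ 0) (n : ℕ) (t : ℝ) :
    iteratedDeriv k (stairStep n) t = 2 * (plateauLeft n - plateauRight (n + 1))⁻¹ ^ k *
      iteratedDeriv k smoothTransition
        ((t - plateauRight (n + 1)) / (plateauLeft n - plateauRight (n + 1))) := by
  unfold stairStep
  rw [iteratedDeriv_const_add (Nat.pos_of_ne_zero hk), iteratedDeriv_const_mul_field,
    iteratedDeriv_ramp, mul_assoc]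

lemma exists_abs_iteratedDeriv_stairStep_le (k : ℕ) :
    ∃ C > 0, ∀ n : ℕ, 1 ≤ n → ∀ t, 0 < t → t ≤ 1 → t * ((n:ℝ) + 1) ≤ 4 →
      |iteratedDeriv k (stairStep n) t| ≤ C / t ^ (2 * k + 1) := by
  rcases eq_or_ne k 0 with rfl | hk
  · refine ⟨8, by norm_num, fun n hn t ht0 ht1 htn => ?_⟩
    obtain ⟨h1, h2⟩ := stairStep_mem_Icc n t
    have : (0:ℝ) ≤ n := n.cast_nonneg
    calc |iteratedDeriv 0 (stairStep n) t| ≤ 2 * (n + 1) := by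
          rw [iteratedDeriv_zero]; exact abs_le.2 ⟨h1, by linarith⟩
      _ ≤ 8 / t ^ (2 * 0 + 1) := by rw [pow_one, le_div_iff₀ ht0]; linarith
  obtain ⟨M, hM⟩ := exists_abs_iteratedDeriv_smoothTransition_le k
  have hM0 : 0 ≤ M := (abs_nonneg _).trans (hM 0)
  refine ⟨2 * M * 24 ^ k + 1, by positivity, fun n hn t ht0 ht1 htn => ?_⟩
  have hn' : (1:ℝ) ≤ n := by exact_mod_cast hn
  -- the gap has width `2 / (3n(n+2)) ≥ t² / 24`
  have hgap : (plateauLeft n - plateauRight (n + 1))⁻¹ ≤ 24 / t ^ 2 := by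
    rw [plateauLeft_sub_plateauRight_succ hn, inv_div,
      div_le_div_iff₀ (by norm_num) (by positivity)]
    nlinarith [mul_le_mul htn htn (by positivity) (by norm_num)]
  have hgap0 : 0 ≤ (plateauLeft n - plateauRight (n + 1))⁻¹ :=
    inv_nonneg.2 (sub_pos.2 (plateauRight_succ_lt_plateauLeft hn)).le
  rw [iteratedDeriv_stairStep hk, abs_mul, abs_of_nonneg (by positivity)]
  calc 2 * (plateauLeft n - plateauRight (n + 1))⁻¹ ^ k * |iteratedDeriv k smoothTransition _|
      ≤ 2 * (24 / t ^ 2) ^ k * M := by gcongr; exact hM _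
    _ = 2 * M * 24 ^ k / t ^ (2 * k) := by rw [div_pow, ← pow_mul]; ring
    _ ≤ (2 * M * 24 ^ k + 1) / t ^ (2 * k + 1) :=
      div_le_div₀ (by positivity) (by linarith) (by positivity)
        (pow_le_pow_of_le_one ht0.le ht1 (by omega))

end Step

def InPiece (n : ℕ) (t : ℝ) : Prop :=
  3 ≤ n ∧ plateauRight (n + 1) ≤ t ∧ (n = 3 ∨ t < plateauRight n)

def pieceIndex (t : ℝ) : ℕ := sInf {n | 3 ≤ n ∧ plateauRight (n + 1) ≤ t}

def stairs (t : ℝ) : ℝ := stairStep (pieceIndex t) t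

section Pieces

variable {n : ℕ} {t : ℝ}

lemma InPiece.unique {m : ℕ} (hm : InPiece m t) (hn : InPiece n t) : m = n := by
  have key : ∀ {i j : ℕ}, InPiece i t → InPiece j t → ¬ i < j := by
    rintro i j ⟨hi, hit, -⟩ ⟨-, -, hj | hjt⟩ hij
    · omega
    · exact (hjt.trans_le (plateauRight_anti (by omega) hij)).not_ge hit
  exact le_antisymm (not_lt.1 (key hn hm)) (not_lt.1 (key hm hn))

lemma inPiece_pieceIndex (ht : 0 < t) : InPiece (pieceIndex t) t := by
  set S := {n | 3 ≤ n ∧ plateauRight (n + 1) ≤ t}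
  have hne : S.Nonempty := by
    obtain ⟨m, hm⟩ := exists_nat_gt (2 / t)
    refine ⟨m + 3, by omega, (plateauRight_le (by omega)).trans ?_⟩
    rw [div_lt_iff₀ ht] at hm
    rw [div_le_iff₀ (by positivity)]
    push_cast
    nlinarith
  obtain ⟨h3, hle⟩ : pieceIndex t ∈ S := Nat.sInf_mem hne
  refine ⟨h3, hle, or_iff_not_imp_left.2 fun hne3 => not_le.1 fun hge => ?_⟩
  have hpred : pieceIndex t - 1 < sInf S := by change _ < pieceIndex t; omega
  exact Nat.notMem_of_lt_sInf hpred ⟨by omega, by rwa [Nat.sub_add_cancel (by omega)]⟩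

lemma InPiece.pieceIndex_eq (h : InPiece n t) : pieceIndex t = n :=
  (inPiece_pieceIndex ((plateauRight_pos _).trans_le h.2.1)).unique h

/-- Near `r_{n+1}` both `stairStep n` and `stairStep (n + 1)` are constant `-2(n+1)`, so the
glued function follows `stairStep n` beyond its own piece, down to `ℓ_{n+1}`. -/
lemma stairs_eq_stairStep (hn : 3 ≤ n) (ht : plateauLeft (n + 1) < t)
    (htop : n = 3 ∨ t < plateauRight n) : stairs t = stairStep n t := by
  rcases lt_or_ge t (plateauRight (n + 1)) with hlt | hge
  · have hpiece : InPiece (n + 1) t :=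
      ⟨by omega, ((plateauRight_succ_lt_plateauLeft (by omega)).trans ht).le, Or.inr hlt⟩
    rw [stairs, hpiece.pieceIndex_eq, stairStep_of_plateauLeft_le (by omega) ht.le,
      stairStep_of_le_plateauRight (by omega) hlt.le]
    push_cast
    ring
  · rw [stairs, InPiece.pieceIndex_eq ⟨hn, hge, htop⟩]

lemma InPiece.stairs_eventuallyEq (h : InPiece n t) : stairs =ᶠ[𝓝 t] stairStep n := by
  have hleft : plateauLeft (n + 1) < t :=
    (plateauLeft_lt_plateauRight (by omega)).trans_le h.2.1
  have htop : ∀ᶠ s in 𝓝 t, n = 3 ∨ s < plateauRight n := by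
    rcases h.2.2 with h3 | hlt
    · exact Eventually.of_forall fun _ => Or.inl h3
    · exact (eventually_lt_nhds hlt).mono fun _ => Or.inr
  filter_upwards [eventually_gt_nhds hleft, htop] with s hs hstop
  exact stairs_eq_stairStep h.1 hs hstop

lemma InPiece.one_le_mul (h : InPiece n t) : 1 ≤ t * ((n:ℝ) + 2) := by
  have := (inv_succ_le_plateauRight (n + 1)).trans h.2.1
  push_cast at this
  rw [div_le_iff₀ (by positivity)] at this
  linarith

lemma InPiece.mul_le_four (h : InPiece n t) (ht1 : t < 1) : t * ((n:ℝ) + 1) ≤ 4 := by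
  obtain ⟨h3, -, rfl | hlt⟩ := h
  · push_cast; linarith
  · have := (lt_div_iff₀ (by positivity)).1 (hlt.trans_le (plateauRight_le (by omega)))
    linarith

end Pieces

lemma stairs_eq_of_mem_plateau {n : ℕ} (hn : 4 ≤ n) {t : ℝ}
    (ht : t ∈ Icc (plateauLeft n) (plateauRight n)) : stairs t = -(2 * (n:ℝ)) := by
  obtain ⟨m, rfl⟩ : ∃ m, n = m + 1 := ⟨n - 1, by omega⟩
  rcases ht.2.lt_or_eq with hlt | rfl
  · have hleft : plateauLeft (m + 2) < t :=
      ((plateauLeft_lt_plateauRight (by omega)).trans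
        (plateauRight_succ_lt_plateauLeft (by omega))).trans_le ht.1
    rw [stairs_eq_stairStep (by omega) hleft (Or.inr hlt),
      stairStep_of_plateauLeft_le (by omega) ht.1]
  · rw [stairs_eq_stairStep (by omega) (plateauLeft_lt_plateauRight (by omega))
      (Or.inr (plateauRight_succ_lt (by omega))), stairStep_of_le_plateauRight (by omega) le_rfl]
    push_cast
    ring

lemma stairs_mem_Icc {t : ℝ} (ht : t ∈ Ioo (0:ℝ) 1) : stairs t ∈ Icc (-(8 / t)) (-(1 / t)) := by
  have h := inPiece_pieceIndex ht.1
  have hn : (3:ℝ) ≤ pieceIndex t := by exact_mod_cast h.1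
  have hlow := h.one_le_mul
  have hup := h.mul_le_four ht.2
  obtain ⟨h1, h2⟩ := stairStep_mem_Icc (pieceIndex t) t
  rw [stairs]
  constructor
  · have : 2 * ((pieceIndex t : ℝ) + 1) ≤ 8 / t := by rw [le_div_iff₀ ht.1]; linarith
    linarith
  · have : 1 / t ≤ 2 * (pieceIndex t : ℝ) := by rw [div_le_iff₀ ht.1]; nlinarith
    linarith

theorem stmt_4 :
    ∃ g : ℝ → ℝ, ContDiffOn ℝ (⊤ : ℕ∞) g (Set.Ioo (0:ℝ) 1) ∧
      (∀ n : ℕ, 4 ≤ n →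
        ∀ t ∈ Set.Icc ((1 / ((n:ℝ)+1)) * (1 + 1 / (3*(n:ℝ)))) ((1 / ((n:ℝ)+1)) * (1 + 2 / (3*(n:ℝ)))),
          g t = -(2*(n:ℝ))) ∧
      (∃ c₁ : ℝ, 0 < c₁ ∧ ∃ c₂ : ℝ, 0 < c₂ ∧
        ∀ t ∈ Set.Ioo (0:ℝ) 1, -(c₁/t) ≤ g t ∧ g t ≤ -(c₂/t)) ∧
      (∀ k : ℕ, ∃ C : ℝ, 0 < C ∧
        ∀ t ∈ Set.Ioo (0:ℝ) 1, |iteratedDerivWithin k g (Set.Ioo (0:ℝ) 1) t| ≤ C / t ^ (3*k+1)) := by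
  refine ⟨stairs, fun t ht => ?_, fun n hn t ht => stairs_eq_of_mem_plateau hn ht,
    ⟨8, by norm_num, 1, by norm_num, fun t ht => stairs_mem_Icc ht⟩, fun k => ?_⟩
  · exact ((contDiff_stairStep _).contDiffAt.congr_of_eventuallyEq
      (inPiece_pieceIndex ht.1).stairs_eventuallyEq).contDiffWithinAt
  obtain ⟨C, hC, hbound⟩ := exists_abs_iteratedDeriv_stairStep_le k
  refine ⟨C, hC, fun t ht => ?_⟩
  have h := inPiece_pieceIndex ht.1
  rw [iteratedDerivWithin_of_isOpen isOpen_Ioo ht, h.stairs_eventuallyEq.iteratedDeriv_eq]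
  calc |iteratedDeriv k (stairStep (pieceIndex t)) t| ≤ C / t ^ (2 * k + 1) :=
        hbound _ (by have := h.1; omega) t ht.1 ht.2.le (h.mul_le_four ht.2)
    _ ≤ C / t ^ (3 * k + 1) :=
        div_le_div_of_nonneg_left hC.le (by have := ht.1; positivity)
          (pow_le_pow_of_le_one ht.1.le ht.2.le (by omega))
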